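/- arXiv:2601.09324 — 3 statements merged into one kernel-verified Lean document; each statement's English description precedes it below -/
import Mathlib

section
/- Let (Y^ε) be a uniformly integrable family of random variables, let (A_ε) be events, and let c_ε > 0 be constants satisfying: for each ε, c_ε · P[A_ε] ≤ E[|Y^ε| ; |Y^ε| ≥ c_ε]. Then the family Ŷ^ε := Y^ε 1_{A_ε^c} + c_ε 1_{A_ε} is also uniformly integrable. -/
/-!
Pointwise, `|Ŷ| 1_{|Ŷ| ≥ K}` is at most `|Y| 1_{|Y| ≥ K} + c 1_A` when `K ≤ c`, and at most
`|Y| 1_{|Y| ≥ K}` when `c < K`, since `Ŷ = c` on `A` and `Ŷ = Y` off `A`. Integrating, and using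
`c P[A] ≤ E[|Y|; |Y| ≥ c] ≤ E[|Y|; |Y| ≥ K]` in the first case, gives
`E[|Ŷ|; |Ŷ| ≥ K] ≤ 2 E[|Y|; |Y| ≥ K]` with the same `K` for every `ε`.
-/

open MeasureTheory Filter Real

namespace MeasureTheory

variable {Ω : Type*} {f : Ω → ℝ} {A : Set Ω} {c K : ℝ}

noncomputable def tailIndicator (f : Ω → ℝ) (K : ℝ) : Ω → ℝ :=
  {ω | K ≤ |f ω|}.indicator fun ω => |f ω|

lemma tailIndicator_nonneg : 0 ≤ tailIndicator f K :=
  Set.indicator_nonneg fun _ _ => abs_nonneg _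

lemma tailIndicator_indicator_compl_add_le_of_le (hc : 0 ≤ c) (hKc : K ≤ c) :
    tailIndicator (Aᶜ.indicator f + A.indicator fun _ => c) K
      ≤ tailIndicator f K + A.indicator fun _ => c := by
  intro ω
  by_cases hω : ω ∈ A
  · simpa [tailIndicator, hω, Set.indicator_apply, abs_of_nonneg hc, hKc]
      using tailIndicator_nonneg (f := f) (K := K) ω
  · simp [tailIndicator, hω, Set.indicator_apply]

lemma tailIndicator_indicator_compl_add_le_of_lt (hc : 0 ≤ c) (hcK : c < K) :
    tailIndicator (Aᶜ.indicator f + A.indicator fun _ => c) K ≤ tailIndicator f K := by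
  intro ω
  by_cases hω : ω ∈ A
  · simpa [tailIndicator, hω, Set.indicator_apply, abs_of_nonneg hc, hcK.not_ge]
      using tailIndicator_nonneg (f := f) (K := K) ω
  · simp [tailIndicator, hω, Set.indicator_apply]

variable [MeasurableSpace Ω] {μ : Measure Ω}

/-- The tail expectation `E[|f|; |f| ≥ K]`. -/
noncomputable def tailIntegral (μ : Measure Ω) (f : Ω → ℝ) (K : ℝ) : ℝ :=
  ∫ ω in {ω | K ≤ |f ω|}, |f ω| ∂μ

lemma nullMeasurableSet_le_abs (hf : AEStronglyMeasurable f μ) (K : ℝ) :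
    NullMeasurableSet {ω | K ≤ |f ω|} μ :=
  nullMeasurableSet_le aemeasurable_const hf.norm.aemeasurable

lemma tailIntegral_eq_integral_tailIndicator (hf : AEStronglyMeasurable f μ) (K : ℝ) :
    tailIntegral μ f K = ∫ ω, tailIndicator f K ω ∂μ :=
  (integral_indicator₀ (nullMeasurableSet_le_abs hf K)).symm

lemma Integrable.tailIndicator (hf : Integrable f μ) (K : ℝ) :
    Integrable (tailIndicator f K) μ :=
  hf.abs.indicator₀ (nullMeasurableSet_le_abs hf.1 K)

lemma tailIntegral_nonneg : 0 ≤ tailIntegral μ f K :=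
  setIntegral_nonneg_of_ae (ae_of_all _ fun _ => abs_nonneg _)

lemma tailIntegral_anti (hf : Integrable f μ) {K K' : ℝ} (hKK' : K ≤ K') :
    tailIntegral μ f K' ≤ tailIntegral μ f K :=
  setIntegral_mono_set hf.abs.integrableOn (ae_of_all _ fun _ => abs_nonneg _)
    (LE.le.eventuallyLE fun _ hω => hKK'.trans hω)

lemma tailIntegral_indicator_compl_add_le [IsFiniteMeasure μ] (hf : Integrable f μ)
    (hA : MeasurableSet A) (hc : 0 ≤ c) (hcA : c * μ.real A ≤ tailIntegral μ f c) (K : ℝ) :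
    tailIntegral μ (Aᶜ.indicator f + A.indicator fun _ => c) K ≤ 2 * tailIntegral μ f K := by
  have hg : Integrable (Aᶜ.indicator f + A.indicator fun _ => c) μ :=
    (hf.indicator hA.compl).add ((integrable_const c).indicator hA)
  have hcInd : Integrable (A.indicator fun _ => c) μ := (integrable_const c).indicator hA
  rw [tailIntegral_eq_integral_tailIndicator hg.1]
  rcases le_or_gt K c with hKc | hcK
  · calc ∫ ω, tailIndicator (Aᶜ.indicator f + A.indicator fun _ => c) K ω ∂μ
        ≤ ∫ ω, (tailIndicator f K + A.indicator fun _ => c) ω ∂μ :=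
          integral_mono (hg.tailIndicator K) ((hf.tailIndicator K).add hcInd)
            (tailIndicator_indicator_compl_add_le_of_le hc hKc)
      _ = tailIntegral μ f K + c * μ.real A := by
          rw [integral_add' (hf.tailIndicator K) hcInd, integral_indicator_const c hA,
            tailIntegral_eq_integral_tailIndicator hf.1, smul_eq_mul, mul_comm]
      _ ≤ tailIntegral μ f K + tailIntegral μ f c := by gcongr
      _ ≤ 2 * tailIntegral μ f K := by linarith [tailIntegral_anti hf hKc]
  · calc ∫ ω, tailIndicator (Aᶜ.indicator f + A.indicator fun _ => c) K ω ∂μ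
        ≤ ∫ ω, tailIndicator f K ω ∂μ :=
          integral_mono (hg.tailIndicator K) (hf.tailIndicator K)
            (tailIndicator_indicator_compl_add_le_of_lt hc hcK)
      _ ≤ 2 * tailIntegral μ f K := by
          rw [← tailIntegral_eq_integral_tailIndicator hf.1]
          linarith [tailIntegral_nonneg (μ := μ) (f := f) (K := K)]

end MeasureTheory

theorem stmt1_general {Ω : Type*} [MeasurableSpace Ω] (μ : Measure Ω) [IsProbabilityMeasure μ]
    (Y : ℝ → Ω → ℝ) (hint : ∀ ε, Integrable (Y ε) μ)
    (hUI : ∀ δ > (0 : ℝ), ∃ K : ℝ, ∀ ε > (0 : ℝ),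
      ∫ ω in {ω | K ≤ |Y ε ω|}, |Y ε ω| ∂μ ≤ δ)
    (A : ℝ → Set Ω) (hA : ∀ ε, MeasurableSet (A ε))
    (c : ℝ → ℝ) (hc : ∀ ε > (0 : ℝ), 0 < c ε)
    (hkey : ∀ ε > (0 : ℝ),
      c ε * (μ (A ε)).toReal ≤ ∫ ω in {ω | c ε ≤ |Y ε ω|}, |Y ε ω| ∂μ)
    (Yhat : ℝ → Ω → ℝ)
    (hYhat : ∀ ε ω, Yhat ε ω = Y ε ω * (A ε)ᶜ.indicator (fun _ => (1 : ℝ)) ω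
        + c ε * (A ε).indicator (fun _ => (1 : ℝ)) ω) :
    ∀ δ > (0 : ℝ), ∃ K : ℝ, ∀ ε > (0 : ℝ),
      ∫ ω in {ω | K ≤ |Yhat ε ω|}, |Yhat ε ω| ∂μ ≤ δ := by
  intro δ hδ
  obtain ⟨K, hK⟩ := hUI (δ / 2) (half_pos hδ)
  refine ⟨K, fun ε hε => ?_⟩
  have hYhat_eq : Yhat ε = (A ε)ᶜ.indicator (Y ε) + (A ε).indicator fun _ => c ε := by
    funext ω
    by_cases hω : ω ∈ A ε <;> simp [hYhat, hω]
  calc tailIntegral μ (Yhat ε) K ≤ 2 * tailIntegral μ (Y ε) K := hYhat_eq ▸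
        tailIntegral_indicator_compl_add_le (hint ε) (hA ε) (hc ε hε).le (hkey ε hε) K
    _ ≤ δ := by linarith [show tailIntegral μ (Y ε) K ≤ δ / 2 from hK ε hε]

/-- If `(Y^ε)` is uniformly integrable, `(A_ε)` are events and `c_ε > 0` satisfy
`c_ε · P[A_ε] ≤ E[|Y^ε|; |Y^ε| ≥ c_ε]`, then `Ŷ^ε := Y^ε 1_{A_ε^c} + c_ε 1_{A_ε}` is also
uniformly integrable. -/
theorem stmt1 {Ω : Type*} [MeasurableSpace Ω] (μ : Measure Ω) [IsProbabilityMeasure μ]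
    (Y : ℝ → Ω → ℝ) (hmeas : ∀ ε, Measurable (Y ε)) (hint : ∀ ε, Integrable (Y ε) μ)
    (hUI : ∀ δ > (0 : ℝ), ∃ K : ℝ, ∀ ε > (0 : ℝ),
      ∫ ω in {ω | K ≤ |Y ε ω|}, |Y ε ω| ∂μ ≤ δ)
    (A : ℝ → Set Ω) (hA : ∀ ε, MeasurableSet (A ε))
    (c : ℝ → ℝ) (hc : ∀ ε > (0 : ℝ), 0 < c ε)
    (hkey : ∀ ε > (0 : ℝ),
      c ε * (μ (A ε)).toReal ≤ ∫ ω in {ω | c ε ≤ |Y ε ω|}, |Y ε ω| ∂μ)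
    (Yhat : ℝ → Ω → ℝ)
    (hYhat : ∀ ε ω, Yhat ε ω = Y ε ω * (A ε)ᶜ.indicator (fun _ => (1 : ℝ)) ω
        + c ε * (A ε).indicator (fun _ => (1 : ℝ)) ω) :
    ∀ δ > (0 : ℝ), ∃ K : ℝ, ∀ ε > (0 : ℝ),
      ∫ ω in {ω | K ≤ |Yhat ε ω|}, |Yhat ε ω| ∂μ ≤ δ :=
  stmt1_general μ Y hint hUI A hA c hc hkey Yhat hYhat
end

section
/- Let φ denote the standard normal density. For any bounded Borel function f : ℝ → ℝ, the function p(s,t) := ∫_ℝ f(s·exp(√t·x − t/2)) φ(x) dx, defined for s > 0 and t > 0, satisfies the Black–Scholes-type PDE ∂p/∂t = (1/2) s² ∂²p/∂s² on (0,∞) × (0,∞). -/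
open MeasureTheory Real

noncomputable def bsKern (u τ x : ℝ) : ℝ := (Real.sqrt (2*π*τ))⁻¹ * Real.exp (-(x-u)^2/(2*τ))
noncomputable def bsKU (u τ x : ℝ) : ℝ := bsKern u τ x * ((x-u)/τ)
noncomputable def bsKUU (u τ x : ℝ) : ℝ := bsKern u τ x * (((x-u)/τ)^2 - 1/τ)

lemma bsKern_deriv_u (τ x u : ℝ) :
    HasDerivAt (fun u => bsKern u τ x) (bsKU u τ x) u := by
  have h1 : HasDerivAt (fun u : ℝ => x - u) (-1) u := (hasDerivAt_id u).const_sub x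
  have h2 : HasDerivAt (fun u : ℝ => -(x - u)^2/(2*τ))
      (-(2*(x-u)^(2-1)*(-1))/(2*τ)) u := ((h1.pow 2).neg).div_const (2*τ)
  have h3 := ((h2.exp).const_mul ((Real.sqrt (2*π*τ))⁻¹))
  refine h3.congr_deriv ?_
  simp only [bsKU, bsKern]
  ring

lemma bsKU_deriv_u (τ x u : ℝ) :
    HasDerivAt (fun u => bsKU u τ x) (bsKUU u τ x) u := by
  have h1 : HasDerivAt (fun u : ℝ => (x - u)/τ) (-1/τ) u :=
    ((hasDerivAt_id u).const_sub x).div_const τ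
  have h2 := (bsKern_deriv_u τ x u).mul h1
  refine h2.congr_deriv ?_
  simp only [bsKUU, bsKU, bsKern]
  ring

lemma bsC_deriv {θ : ℝ} (hθ : 0 < θ) :
    HasDerivAt (fun θ : ℝ => (Real.sqrt (2*π*θ))⁻¹)
      (-(1/(2*θ)) * (Real.sqrt (2*π*θ))⁻¹) θ := by
  have hpos : 0 < 2*π*θ := by positivity
  have h1 : HasDerivAt (fun θ : ℝ => 2*π*θ) (2*π) θ := by
    simpa using (hasDerivAt_id θ).const_mul (2*π)
  have h2 : HasDerivAt (fun θ : ℝ => Real.sqrt (2*π*θ))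
      (1 / (2 * Real.sqrt (2*π*θ)) * (2*π)) θ :=
    (Real.hasDerivAt_sqrt hpos.ne').comp θ h1
  have hsq : Real.sqrt (2*π*θ) ≠ 0 := by positivity
  have h3 := h2.inv hsq
  refine h3.congr_deriv ?_
  set S := Real.sqrt (2*π*θ) with hS
  have hS2 : S^2 = 2*π*θ := Real.sq_sqrt hpos.le
  have hSpos : 0 < S := Real.sqrt_pos.2 hpos
  rw [hS2]
  field_simp

lemma bsComp_deriv_t (s x : ℝ) {θ : ℝ} (hθ : 0 < θ) :
    HasDerivAt (fun θ' => bsKern (Real.log s - θ'/2) θ' x)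
      ((1/2) * bsKUU (Real.log s - θ/2) θ x - (1/2) * bsKU (Real.log s - θ/2) θ x) θ := by
  set a := x - Real.log s with ha
  have hg : HasDerivAt (fun θ' : ℝ => -a^2/2 * θ'⁻¹ - a/2 - θ'/8)
      (-a^2/2 * (-(θ^2)⁻¹) - 1/8) θ := by
    have h1 := (hasDerivAt_inv hθ.ne').const_mul (-a^2/2)
    have h2 := (h1.sub_const (a/2)).sub ((hasDerivAt_id θ).div_const 8)
    exact h2
  have hE := hg.exp
  have hC := bsC_deriv hθ
  have hCE := hC.mul hE
  have heq : (fun θ' => bsKern (Real.log s - θ'/2) θ' x)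
      =ᶠ[nhds θ] (fun θ' => (Real.sqrt (2*π*θ'))⁻¹ * Real.exp (-a^2/2 * θ'⁻¹ - a/2 - θ'/8)) := by
    filter_upwards [isOpen_Ioi.mem_nhds (Set.mem_Ioi.2 hθ)] with θ' hθ'
    have hθ'0 : (θ' : ℝ) ≠ 0 := (Set.mem_Ioi.1 hθ').ne'
    have harg : -(x - (Real.log s - θ'/2))^2/(2*θ') = -a^2/2 * θ'⁻¹ - a/2 - θ'/8 := by
      field_simp
      ring
    rw [bsKern, harg]
  have hfinal := hCE.congr_of_eventuallyEq heq
  refine hfinal.congr_deriv ?_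
  have hexp : Real.exp (-(x - (Real.log s - θ/2))^2/(2*θ)) = Real.exp (-a^2/2 * θ⁻¹ - a/2 - θ/8) := by
    congr 1
    field_simp
    ring
  simp only [bsKUU, bsKU, bsKern, hexp]
  field_simp
  ring

lemma bsComp_deriv_s (t x : ℝ) {σ : ℝ} (hσ : 0 < σ) :
    HasDerivAt (fun s' => bsKern (Real.log s' - t/2) t x)
      (bsKU (Real.log σ - t/2) t x * σ⁻¹) σ := by
  have hlog : HasDerivAt (fun s' : ℝ => Real.log s' - t/2) σ⁻¹ σ :=
    (Real.hasDerivAt_log hσ.ne').sub_const (t/2)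
  exact (bsKern_deriv_u t x _).comp σ hlog

lemma bsCompU_deriv_s (t x : ℝ) {σ : ℝ} (hσ : 0 < σ) :
    HasDerivAt (fun s' => bsKU (Real.log s' - t/2) t x)
      (bsKUU (Real.log σ - t/2) t x * σ⁻¹) σ := by
  have hlog : HasDerivAt (fun s' : ℝ => Real.log s' - t/2) σ⁻¹ σ :=
    (Real.hasDerivAt_log hσ.ne').sub_const (t/2)
  exact (bsKU_deriv_u t x _).comp σ hlog

lemma bs_texp (tt : ℝ) (h : 0 ≤ tt) : tt * Real.exp (-tt) ≤ 1 := by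
  have h1 : tt ≤ Real.exp tt := by linarith [Real.add_one_le_exp tt]
  calc tt * Real.exp (-tt) ≤ Real.exp tt * Real.exp (-tt) :=
        mul_le_mul_of_nonneg_right h1 (Real.exp_pos _).le
    _ = 1 := by rw [← Real.exp_add]; simp

set_option maxHeartbeats 2000000 in
lemma bsBounds (u0 τ0 r : ℝ) (hτ0 : 0 < τ0) (hr : 0 < r) :
    ∃ B : ℝ, 0 < B ∧ ∀ u τ x : ℝ, |u - u0| ≤ r → τ0/2 ≤ τ → τ ≤ 2*τ0 →
      |bsKern u τ x| ≤ B * Real.exp (-x^2/(16*τ0)) ∧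
      |bsKU u τ x| ≤ B * Real.exp (-x^2/(16*τ0)) ∧
      |bsKUU u τ x| ≤ B * Real.exp (-x^2/(16*τ0)) := by
  set c0 : ℝ := (Real.sqrt (π*τ0))⁻¹ with hc0
  set A : ℝ := Real.exp ((|u0|+r)^2/(2*τ0)) with hA
  have hc0pos : 0 < c0 := by positivity
  have hApos : 0 < A := Real.exp_pos _
  set S : ℝ := 1 + (1+8*τ0)*(2/τ0) + 10/τ0 with hSdef
  have hS0 : 0 < S := by positivity
  have hS1 : (1:ℝ) ≤ S := by
    have h1 : 0 ≤ (1+8*τ0)*(2/τ0) := by positivity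
    have h2 : 0 ≤ 10/τ0 := by positivity
    simp only [hSdef]; linarith
  have hS2' : (1+8*τ0)*(2/τ0) ≤ S := by
    have h2 : 0 ≤ 10/τ0 := by positivity
    simp only [hSdef]; linarith
  have hS3 : 10/τ0 ≤ S := by
    have h1 : 0 ≤ (1+8*τ0)*(2/τ0) := by positivity
    simp only [hSdef]; linarith
  refine ⟨c0 * A * S, by positivity, ?_⟩
  intro u τ x hu hτ1 hτ2
  have hτ : 0 < τ := lt_of_lt_of_le (by positivity) hτ1
  set E : ℝ := Real.exp (-(x-u)^2/(4*τ)) with hE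
  have hEpos : 0 < E := Real.exp_pos _
  have hE1 : E ≤ 1 := Real.exp_le_one_iff.2
    (div_nonpos_of_nonpos_of_nonneg (neg_nonpos.2 (sq_nonneg _)) (by positivity))
  have hEE : Real.exp (-(x-u)^2/(2*τ)) = E * E := by
    rw [hE, ← Real.exp_add]
    congr 1
    field_simp
    ring
  have hq : (x-u)^2 * E ≤ 4*τ := by
    have h1 := bs_texp ((x-u)^2/(4*τ)) (by positivity)
    have h2 : -((x-u)^2/(4*τ)) = -(x-u)^2/(4*τ) := by ring
    rw [h2] at h1
    have h3 := mul_le_mul_of_nonneg_right h1 (by positivity : (0:ℝ) ≤ 4*τ)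
    have h4 : (x-u)^2/(4*τ) * E * (4*τ) = (x-u)^2 * E := by field_simp
    linarith [h4 ▸ h3]
  have habs : |x-u| ≤ 1 + (x-u)^2 := by
    nlinarith [sq_nonneg (|x-u|-1), sq_abs (x-u), abs_nonneg (x-u)]
  have hsqpos : 0 < Real.sqrt (2*π*τ) := Real.sqrt_pos.2 (by positivity)
  have hcle : (Real.sqrt (2*π*τ))⁻¹ ≤ c0 := by
    rw [hc0]
    apply inv_anti₀ (Real.sqrt_pos.2 (by positivity))
    apply Real.sqrt_le_sqrt
    nlinarith [pi_pos]
  have hcpos : 0 < (Real.sqrt (2*π*τ))⁻¹ := by positivity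
  set e : ℝ := Real.exp (-x^2/(16*τ0)) with he
  have hepos : 0 < e := Real.exp_pos _
  have hEA : E ≤ A * e := by
    rw [hE, hA, he, ← Real.exp_add]
    apply Real.exp_le_exp.2
    have hu' : |u| ≤ |u0| + r := by
      calc |u| = |u0 + (u - u0)| := by ring_nf
        _ ≤ |u0| + |u - u0| := abs_add_le _ _
        _ ≤ |u0| + r := by linarith
    have hu2 : u^2 ≤ (|u0|+r)^2 := by
      rw [← sq_abs u]
      exact pow_le_pow_left₀ (abs_nonneg u) hu' 2
    have h1 : x^2 ≤ 2*(x-u)^2 + 2*u^2 := by nlinarith [sq_nonneg (x - 2*u)]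
    have e1 : (x-u)^2/(8*τ0) ≤ (x-u)^2/(4*τ) :=
      div_le_div_of_nonneg_left (sq_nonneg _) (by positivity) (by linarith)
    have e2 : -(x-u)^2/(4*τ) ≤ -(x-u)^2/(8*τ0) := by
      rw [neg_div, neg_div]
      linarith
    have e3 : -(x-u)^2/(8*τ0) ≤ ((|u0|+r)^2 - x^2/2)/(8*τ0) := by
      gcongr
      linarith
    have e4 : ((|u0|+r)^2 - x^2/2)/(8*τ0) ≤ (|u0|+r)^2/(2*τ0) + -x^2/(16*τ0) := by
      have h5 : (|u0|+r)^2/(2*τ0) + -x^2/(16*τ0) - ((|u0|+r)^2 - x^2/2)/(8*τ0)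
          = 3*(|u0|+r)^2/(8*τ0) := by field_simp; ring
      have h6 : 0 ≤ 3*(|u0|+r)^2/(8*τ0) := by positivity
      linarith
    linarith
  have hτinv : 1/τ ≤ 2/τ0 := by
    rw [div_le_div_iff₀ hτ (by positivity)]
    linarith
  refine ⟨?_, ?_, ?_⟩
  · have h0 : |bsKern u τ x| = (Real.sqrt (2*π*τ))⁻¹ * (E * E) := by
      rw [bsKern, hEE, abs_of_nonneg (by positivity)]
    rw [h0]
    calc (Real.sqrt (2*π*τ))⁻¹ * (E * E) ≤ c0 * (1 * (A * e)) := by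
          apply mul_le_mul hcle ?_ (by positivity) hc0pos.le
          exact mul_le_mul hE1 hEA hEpos.le (by norm_num)
      _ = c0 * A * 1 * e := by ring
      _ ≤ c0 * A * S * e := by
          apply mul_le_mul_of_nonneg_right ?_ hepos.le
          exact mul_le_mul_of_nonneg_left hS1 (by positivity)
  · have h0 : |bsKU u τ x| = (Real.sqrt (2*π*τ))⁻¹ * (E*E) * (|x-u|/τ) := by
      rw [bsKU, bsKern, hEE, abs_mul, abs_of_nonneg (by positivity), abs_div,
        abs_of_nonneg hτ.le]
    rw [h0]
    have key : E * E * |x-u| ≤ (1 + 4*τ) * (A*e) := by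
      calc E * E * |x-u| ≤ E * E * (1 + (x-u)^2) :=
            mul_le_mul_of_nonneg_left habs (by positivity)
        _ = E * (E + (x-u)^2 * E) := by ring
        _ ≤ E * (1 + 4*τ) := by
            apply mul_le_mul_of_nonneg_left ?_ hEpos.le
            linarith
        _ ≤ (A*e) * (1 + 4*τ) := mul_le_mul_of_nonneg_right hEA (by positivity)
        _ = (1 + 4*τ) * (A*e) := by ring
    calc (Real.sqrt (2*π*τ))⁻¹ * (E*E) * (|x-u|/τ)
        = (Real.sqrt (2*π*τ))⁻¹ * (E*E*|x-u|) * (1/τ) := by ring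
      _ ≤ c0 * ((1+4*τ)*(A*e)) * (2/τ0) := by
          apply mul_le_mul ?_ hτinv (by positivity) (by positivity)
          exact mul_le_mul hcle key (by positivity) hc0pos.le
      _ = c0 * A * ((1+4*τ)*(2/τ0)) * e := by ring
      _ ≤ c0 * A * S * e := by
          apply mul_le_mul_of_nonneg_right ?_ hepos.le
          apply mul_le_mul_of_nonneg_left ?_ (by positivity)
          calc (1+4*τ)*(2/τ0) ≤ (1+8*τ0)*(2/τ0) := by
                apply mul_le_mul_of_nonneg_right (by linarith) (by positivity)
            _ ≤ S := hS2'
  · have h0 : |bsKUU u τ x| ≤ (Real.sqrt (2*π*τ))⁻¹ * (E*E) * ((x-u)^2/τ^2 + 1/τ) := by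
      rw [bsKUU, bsKern, hEE, abs_mul, abs_of_nonneg (by positivity), div_pow]
      apply mul_le_mul_of_nonneg_left ?_ (by positivity)
      have h1 : 0 ≤ (x-u)^2/τ^2 := by positivity
      have h2 : 0 ≤ 1/τ := by positivity
      rw [abs_le]
      constructor <;> [linarith; linarith]
    have key : (E*E) * ((x-u)^2/τ^2 + 1/τ) ≤ (10/τ0) * (A*e) := by
      have k0 : E*E ≤ E := by nlinarith
      have k1 : (E*E) * ((x-u)^2/τ^2 + 1/τ) = ((x-u)^2*E)*(E/τ^2) + (E*E)*(1/τ) := by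
        field_simp
      have k2 : ((x-u)^2*E)*(E/τ^2) ≤ (4*τ)*(E/τ^2) :=
        mul_le_mul_of_nonneg_right hq (by positivity)
      have k3 : (E*E)*(1/τ) ≤ E*(1/τ) := mul_le_mul_of_nonneg_right k0 (by positivity)
      have k4 : (4*τ)*(E/τ^2) + E*(1/τ) = (5/τ)*E := by field_simp; ring
      have k5 : (5/τ)*E ≤ (10/τ0)*(A*e) := by
        apply mul_le_mul ?_ hEA hEpos.le (by positivity)
        rw [div_le_div_iff₀ hτ (by positivity)]
        linarith
      linarith [k1 ▸ (by linarith : ((x-u)^2*E)*(E/τ^2) + (E*E)*(1/τ) ≤ (5/τ)*E)]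
    calc |bsKUU u τ x| ≤ (Real.sqrt (2*π*τ))⁻¹ * (E*E) * ((x-u)^2/τ^2 + 1/τ) := h0
      _ = (Real.sqrt (2*π*τ))⁻¹ * ((E*E) * ((x-u)^2/τ^2 + 1/τ)) := by ring
      _ ≤ c0 * ((10/τ0) * (A*e)) := by
          apply mul_le_mul hcle key (by positivity) hc0pos.le
      _ = c0 * A * (10/τ0) * e := by ring
      _ ≤ c0 * A * S * e := by
          apply mul_le_mul_of_nonneg_right ?_ hepos.le
          exact mul_le_mul_of_nonneg_left hS3 (by positivity)

lemma bsParamDeriv (F : ℝ → ℝ) (M : ℝ) (hM : ∀ x, |F x| ≤ M)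
    (K K' : ℝ → ℝ → ℝ) (θ0 ε : ℝ) (hε : 0 < ε)
    (hKmeas : ∀ θ, AEStronglyMeasurable (fun x => F x * K θ x) volume)
    (hK'meas : AEStronglyMeasurable (fun x => F x * K' θ0 x) volume)
    (hderiv : ∀ x : ℝ, ∀ θ ∈ Metric.ball θ0 ε, HasDerivAt (fun θ => K θ x) (K' θ x) θ)
    (bound : ℝ → ℝ)
    (hbd : ∀ x : ℝ, ∀ θ ∈ Metric.ball θ0 ε, |K' θ x| ≤ bound x)
    (hbound : Integrable bound volume)
    (hK0int : Integrable (fun x => F x * K θ0 x) volume) :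
    Integrable (fun x => F x * K' θ0 x) volume ∧
      HasDerivAt (fun θ => ∫ x : ℝ, F x * K θ x) (∫ x : ℝ, F x * K' θ0 x) θ0 := by
  have hM0 : 0 ≤ M := le_trans (abs_nonneg _) (hM 0)
  exact hasDerivAt_integral_of_dominated_loc_of_deriv_le (Metric.ball_mem_nhds θ0 hε)
    (Filter.Eventually.of_forall fun θ => hKmeas θ) hK0int hK'meas
    (Filter.Eventually.of_forall fun x θ hθ => by
      have := hbd x θ hθ
      have h2 := hM x
      calc ‖F x * K' θ x‖ = |F x| * |K' θ x| := abs_mul _ _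
        _ ≤ M * bound x :=
          mul_le_mul h2 this (abs_nonneg _) hM0)
    (hbound.const_mul M)
    (Filter.Eventually.of_forall fun x θ hθ => (hderiv x θ hθ).const_mul (F x))

lemma bsRepr (f : ℝ → ℝ) (s' t' : ℝ) (hs' : 0 < s') (ht' : 0 < t') :
    (∫ x : ℝ, f (s' * Real.exp (Real.sqrt t' * x - t'/2)) *
        ((2*π) ^ (-(1:ℝ)/2) * Real.exp (-x^2/2)))
      = ∫ x : ℝ, f (Real.exp x) * bsKern (Real.log s' - t'/2) t' x := by
  set u : ℝ := Real.log s' - t'/2 with hu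
  have hst : (0:ℝ) < Real.sqrt t' := Real.sqrt_pos.2 ht'
  have hrpow : (2*π) ^ (-(1:ℝ)/2) = (Real.sqrt (2*π))⁻¹ := by
    rw [show (-(1:ℝ)/2) = -(1/2) by ring, Real.rpow_neg (by positivity), ← Real.sqrt_eq_rpow]
  have key : ∀ x : ℝ, f (s' * Real.exp (Real.sqrt t' * x - t'/2)) *
      ((2*π) ^ (-(1:ℝ)/2) * Real.exp (-x^2/2))
      = Real.sqrt t' • ((fun y => f (Real.exp y) * bsKern u t' y) (Real.sqrt t' * x + u)) := by
    intro x
    have harg : s' * Real.exp (Real.sqrt t' * x - t'/2) = Real.exp (Real.sqrt t' * x + u) := by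
      rw [hu, show Real.sqrt t' * x + (Real.log s' - t'/2)
        = Real.log s' + (Real.sqrt t' * x - t'/2) by ring, Real.exp_add, Real.exp_log hs']
    have hker : bsKern u t' (Real.sqrt t' * x + u)
        = (Real.sqrt (2*π*t'))⁻¹ * Real.exp (-x^2/2) := by
      rw [bsKern, add_sub_cancel_right]
      congr 1
      rw [mul_pow, Real.sq_sqrt ht'.le]
      field_simp
    simp only [smul_eq_mul, harg, hker, hrpow]
    have hsqrtmul : Real.sqrt (2*π*t') = Real.sqrt (2*π) * Real.sqrt t' := by
      rw [Real.sqrt_mul (by positivity)]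
    rw [hsqrtmul]
    field_simp
  calc (∫ x : ℝ, f (s' * Real.exp (Real.sqrt t' * x - t'/2)) *
        ((2*π) ^ (-(1:ℝ)/2) * Real.exp (-x^2/2)))
      = ∫ x : ℝ, Real.sqrt t' •
          ((fun y => f (Real.exp y) * bsKern u t' y) (Real.sqrt t' * x + u)) := by
        exact integral_congr_ae (Filter.Eventually.of_forall key)
    _ = Real.sqrt t' • ∫ x : ℝ,
          (fun y => f (Real.exp y) * bsKern u t' y) (Real.sqrt t' * x + u) := integral_smul _ _
    _ = Real.sqrt t' • (|(Real.sqrt t')⁻¹| • ∫ y : ℝ, f (Real.exp y) * bsKern u t' y) := by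
        congr 1
        have h1 : (∫ x : ℝ, (fun z : ℝ => (fun y => f (Real.exp y) * bsKern u t' y) (z + u))
              (Real.sqrt t' * x))
            = |(Real.sqrt t')⁻¹| • ∫ z : ℝ,
              (fun y => f (Real.exp y) * bsKern u t' y) (z + u) :=
          MeasureTheory.Measure.integral_comp_mul_left
            (fun z : ℝ => (fun y => f (Real.exp y) * bsKern u t' y) (z + u)) (Real.sqrt t')
        have h2 : (∫ z : ℝ, (fun y => f (Real.exp y) * bsKern u t' y) (z + u))
            = ∫ y : ℝ, f (Real.exp y) * bsKern u t' y :=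
          integral_add_right_eq_self (fun y => f (Real.exp y) * bsKern u t' y) u
        rw [← h2, ← h1]
    _ = ∫ y : ℝ, f (Real.exp y) * bsKern u t' y := by
        rw [abs_of_pos (inv_pos.2 hst), smul_smul, mul_inv_cancel₀ hst.ne', one_smul]

lemma bsKern_cont (u τ : ℝ) : Continuous (fun x => bsKern u τ x) := by
  unfold bsKern; fun_prop

lemma bsKU_cont (u τ : ℝ) : Continuous (fun x => bsKU u τ x) := by
  unfold bsKU bsKern; fun_prop

lemma bsKUU_cont (u τ : ℝ) : Continuous (fun x => bsKUU u τ x) := by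
  unfold bsKUU bsKern; fun_prop

lemma bsGaussInt (c : ℝ) (hc : 0 < c) :
    Integrable (fun x : ℝ => Real.exp (-x^2/c)) volume := by
  have h := integrable_exp_neg_mul_sq (show (0:ℝ) < 1/c by positivity)
  have heq : (fun x : ℝ => Real.exp (-(1/c)*x^2)) = (fun x : ℝ => Real.exp (-x^2/c)) :=
    funext fun x => by rw [show -(1/c)*x^2 = -x^2/c by ring]
  rw [← heq]; exact h

lemma bsAbsHalf (X Y b : ℝ) (hX : |X| ≤ b) (hY : |Y| ≤ b) :
    |(1/2) * X - (1/2) * Y| ≤ b := by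
  have h1 : |(1/2) * X - (1/2) * Y| = (1/2) * |X - Y| := by
    rw [← mul_sub, abs_mul]; norm_num
  have h2 : |X - Y| ≤ |X| + |Y| := by
    calc |X - Y| = |X + -Y| := by rw [sub_eq_add_neg]
      _ ≤ |X| + |-Y| := abs_add_le _ _
      _ = |X| + |Y| := by rw [abs_neg]
  linarith

lemma bsLogBound (s θ : ℝ) (hs : 0 < s) (hθ : 0 < θ)
    (h1 : 3*s/8 < θ) (h2 : θ < 15*s/8) : |Real.log θ - Real.log s| ≤ 2 := by
  rw [abs_le]
  constructor
  · have hd : Real.log s - Real.log θ = Real.log (s/θ) := (Real.log_div hs.ne' hθ.ne').symm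
    have hr : s/θ ≤ 8/3 := by
      rw [div_le_iff₀ hθ]; linarith
    have := Real.log_le_sub_one_of_pos (show (0:ℝ) < s/θ by positivity)
    linarith
  · have hd : Real.log θ - Real.log s = Real.log (θ/s) := (Real.log_div hθ.ne' hs.ne').symm
    have hr : θ/s ≤ 15/8 := by
      rw [div_le_iff₀ hs]; linarith
    have := Real.log_le_sub_one_of_pos (show (0:ℝ) < θ/s by positivity)
    linarith

/-- For bounded Borel `f`, the function
`p(s,t) = ∫ f(s·exp(√t·x − t/2)) φ(x) dx` (with `φ` the standard normal density)
satisfies `∂p/∂t = (1/2) s² ∂²p/∂s²` on `(0,∞) × (0,∞)`. -/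
theorem stmt2 (f : ℝ → ℝ) (hf : Measurable f) (M : ℝ) (hbd : ∀ x, |f x| ≤ M)
    (p : ℝ → ℝ → ℝ)
    (hp : ∀ s t, p s t =
      ∫ x : ℝ, f (s * exp (sqrt t * x - t / 2)) * ((2 * π) ^ (-(1:ℝ)/2) * exp (-x ^ 2 / 2)))
    (s t : ℝ) (hs : 0 < s) (ht : 0 < t) :
    deriv (fun t' => p s t') t = (1 / 2) * s ^ 2 * iteratedDeriv 2 (fun s' => p s' t) s := by
  have hFmeas : Measurable (fun y : ℝ => f (Real.exp y)) := hf.comp Real.measurable_exp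
  set F : ℝ → ℝ := fun y : ℝ => f (Real.exp y) with hF
  have hFbd : ∀ x, |F x| ≤ M := fun x => hbd _
  have hM0 : 0 ≤ M := le_trans (abs_nonneg _) (hbd 0)
  set u0 : ℝ := Real.log s - t/2 with hu0
  have hmeasK : ∀ u τ : ℝ, AEStronglyMeasurable (fun x => F x * bsKern u τ x) volume :=
    fun u τ => (hFmeas.mul (bsKern_cont u τ).measurable).aestronglyMeasurable
  have hmeasKU : ∀ u τ : ℝ, AEStronglyMeasurable (fun x => F x * bsKU u τ x) volume :=
    fun u τ => (hFmeas.mul (bsKU_cont u τ).measurable).aestronglyMeasurable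
  have hmeasKUU : ∀ u τ : ℝ, AEStronglyMeasurable (fun x => F x * bsKUU u τ x) volume :=
    fun u τ => (hFmeas.mul (bsKUU_cont u τ).measurable).aestronglyMeasurable
  obtain ⟨B, hBpos, hBd⟩ := bsBounds u0 t (2 + t) ht (by linarith)
  have hGint : Integrable (fun x : ℝ => Real.exp (-x^2/(16*t))) volume :=
    bsGaussInt _ (by positivity)
  have hbself : |u0 - u0| ≤ 2 + t := by simp; linarith
  have ht1 : t/2 ≤ t := by linarith
  have ht2 : t ≤ 2*t := by linarith
  have intK : Integrable (fun x => F x * bsKern u0 t x) volume := by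
    apply (hGint.const_mul (M * B)).mono' (hmeasK u0 t)
    filter_upwards with x
    have h1 := (hBd u0 t x hbself ht1 ht2).1
    calc ‖F x * bsKern u0 t x‖ = |F x| * |bsKern u0 t x| := abs_mul _ _
      _ ≤ M * (B * Real.exp (-x^2/(16*t))) := mul_le_mul (hFbd x) h1 (abs_nonneg _) hM0
      _ = M * B * Real.exp (-x^2/(16*t)) := by ring
  have intKU : Integrable (fun x => F x * bsKU u0 t x) volume := by
    apply (hGint.const_mul (M * B)).mono' (hmeasKU u0 t)
    filter_upwards with x
    have h1 := (hBd u0 t x hbself ht1 ht2).2.1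
    calc ‖F x * bsKU u0 t x‖ = |F x| * |bsKU u0 t x| := abs_mul _ _
      _ ≤ M * (B * Real.exp (-x^2/(16*t))) := mul_le_mul (hFbd x) h1 (abs_nonneg _) hM0
      _ = M * B * Real.exp (-x^2/(16*t)) := by ring
  have intKUU : Integrable (fun x => F x * bsKUU u0 t x) volume := by
    apply (hGint.const_mul (M * B)).mono' (hmeasKUU u0 t)
    filter_upwards with x
    have h1 := (hBd u0 t x hbself ht1 ht2).2.2
    calc ‖F x * bsKUU u0 t x‖ = |F x| * |bsKUU u0 t x| := abs_mul _ _
      _ ≤ M * (B * Real.exp (-x^2/(16*t))) := mul_le_mul (hFbd x) h1 (abs_nonneg _) hM0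
      _ = M * B * Real.exp (-x^2/(16*t)) := by ring
  -- Part 1 : the t-derivative
  have hT : HasDerivAt (fun θ => ∫ x : ℝ, F x * bsKern (Real.log s - θ/2) θ x)
      (∫ x : ℝ, F x * ((1/2) * bsKUU u0 t x - (1/2) * bsKU u0 t x)) t := by
    have hmain := bsParamDeriv F M hFbd
      (fun θ x => bsKern (Real.log s - θ/2) θ x)
      (fun θ x => (1/2) * bsKUU (Real.log s - θ/2) θ x - (1/2) * bsKU (Real.log s - θ/2) θ x)
      t (t/2) (by linarith)
      (fun θ => hmeasK _ _)
      (by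
        have heq : (fun x => F x * ((1/2) * bsKUU (Real.log s - t/2) t x
            - (1/2) * bsKU (Real.log s - t/2) t x))
            = fun x => (1/2) * (F x * bsKUU u0 t x) - (1/2) * (F x * bsKU u0 t x) := by
          funext x; rw [hu0]; ring
        exact heq ▸ ((intKUU.const_mul (1/2)).sub (intKU.const_mul (1/2))).aestronglyMeasurable)
      (fun x θ hθ => by
        have hd : |θ - t| < t/2 := by rw [← Real.dist_eq]; exact Metric.mem_ball.1 hθ
        have hθpos : 0 < θ := by have := abs_lt.1 hd; linarith
        exact bsComp_deriv_t s x hθpos)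
      (fun x => B * Real.exp (-x^2/(16*t)))
      (fun x θ hθ => by
        have hd : |θ - t| < t/2 := by rw [← Real.dist_eq]; exact Metric.mem_ball.1 hθ
        have had := abs_lt.1 hd
        have hudist : |(Real.log s - θ/2) - u0| ≤ 2 + t := by
          have heq2 : (Real.log s - θ/2) - u0 = (t - θ)/2 := by rw [hu0]; ring
          rw [heq2, abs_div, abs_two]
          have : |t - θ| < t/2 := by rw [abs_sub_comm]; exact hd
          linarith [abs_nonneg (t - θ)]
        have hb := hBd (Real.log s - θ/2) θ x hudist (by linarith) (by linarith)
        exact bsAbsHalf _ _ _ hb.2.2 hb.2.1)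
      (hGint.const_mul B)
      (by exact intK)
    exact hmain.2
  have hps : (fun t' => p s t')
      =ᶠ[nhds t] (fun θ => ∫ x : ℝ, F x * bsKern (Real.log s - θ/2) θ x) := by
    filter_upwards [isOpen_Ioi.mem_nhds (Set.mem_Ioi.2 ht)] with θ hθ
    rw [hp s θ]
    exact bsRepr f s θ hs hθ
  have hLHS : deriv (fun t' => p s t')  t
      = ∫ x : ℝ, F x * ((1/2) * bsKUU u0 t x - (1/2) * bsKU u0 t x) := by
    rw [hps.deriv_eq]; exact hT.deriv
  -- Part 2 : the s-derivatives
  have hC : ∀ σ ∈ Metric.ball s (s/2),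
      HasDerivAt (fun σ' => ∫ x : ℝ, F x * bsKern (Real.log σ' - t/2) t x)
        (σ⁻¹ * ∫ x : ℝ, F x * bsKU (Real.log σ - t/2) t x) σ := by
    intro σ hσmem
    have hσd : |σ - s| < s/2 := by rw [← Real.dist_eq]; exact Metric.mem_ball.1 hσmem
    have hσl := abs_lt.1 hσd
    have hσpos : 0 < σ := by linarith
    have hmain := bsParamDeriv F M hFbd
      (fun θ x => bsKern (Real.log θ - t/2) t x)
      (fun θ x => bsKU (Real.log θ - t/2) t x * θ⁻¹)
      σ (σ/4) (by linarith)
      (fun θ => hmeasK _ _)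
      ((hFmeas.mul ((bsKU_cont _ _).measurable.mul_const σ⁻¹)).aestronglyMeasurable)
      (fun x θ hθ => by
        have hd : |θ - σ| < σ/4 := by rw [← Real.dist_eq]; exact Metric.mem_ball.1 hθ
        have hdl := abs_lt.1 hd
        have hθpos : 0 < θ := by linarith
        exact bsComp_deriv_s t x hθpos)
      (fun x => B * Real.exp (-x^2/(16*t)) * (2/σ))
      (fun x θ hθ => by
        have hd : |θ - σ| < σ/4 := by rw [← Real.dist_eq]; exact Metric.mem_ball.1 hθ
        have hdl := abs_lt.1 hd
        have hθpos : 0 < θ := by linarith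
        have hlog : |Real.log θ - Real.log s| ≤ 2 :=
          bsLogBound s θ hs hθpos (by linarith) (by linarith)
        have hudist : |(Real.log θ - t/2) - u0| ≤ 2 + t := by
          have heq2 : (Real.log θ - t/2) - u0 = Real.log θ - Real.log s := by rw [hu0]; ring
          rw [heq2]; linarith
        have hb := (hBd (Real.log θ - t/2) t x hudist ht1 ht2).2.1
        have hinv : θ⁻¹ ≤ 2/σ := by
          rw [inv_eq_one_div, div_le_div_iff₀ hθpos hσpos]; linarith
        calc |bsKU (Real.log θ - t/2) t x * θ⁻¹|
            = |bsKU (Real.log θ - t/2) t x| * θ⁻¹ := by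
              rw [abs_mul, abs_of_pos (inv_pos.2 hθpos)]
          _ ≤ (B * Real.exp (-x^2/(16*t))) * (2/σ) :=
              mul_le_mul hb hinv (inv_pos.2 hθpos).le (by positivity)
          _ = B * Real.exp (-x^2/(16*t)) * (2/σ) := by ring)
      ((hGint.const_mul B).mul_const (2/σ))
      (by
        have heq : (fun x => F x * bsKern (Real.log σ - t/2) t x) =
            fun x => F x * bsKern (Real.log σ - t/2) t x := rfl
        -- integrability at σ: use bound again
        apply (hGint.const_mul (M * B)).mono' (hmeasK _ _)
        filter_upwards with x
        have hlog : |Real.log σ - Real.log s| ≤ 2 :=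
          bsLogBound s σ hs hσpos (by linarith) (by linarith)
        have hudist : |(Real.log σ - t/2) - u0| ≤ 2 + t := by
          have heq2 : (Real.log σ - t/2) - u0 = Real.log σ - Real.log s := by rw [hu0]; ring
          rw [heq2]; linarith
        have h1 := (hBd (Real.log σ - t/2) t x hudist ht1 ht2).1
        calc ‖F x * bsKern (Real.log σ - t/2) t x‖
            = |F x| * |bsKern (Real.log σ - t/2) t x| := abs_mul _ _
          _ ≤ M * (B * Real.exp (-x^2/(16*t))) := mul_le_mul (hFbd x) h1 (abs_nonneg _) hM0
          _ = M * B * Real.exp (-x^2/(16*t)) := by ring)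
    have hder := hmain.2
    beta_reduce at hder
    have heq : (fun x => F x * (bsKU (Real.log σ - t/2) t x * σ⁻¹))
        = fun x => σ⁻¹ * (F x * bsKU (Real.log σ - t/2) t x) := funext fun x => by ring
    rw [heq, integral_const_mul] at hder
    exact hder
  have hD : HasDerivAt (fun σ => ∫ x : ℝ, F x * bsKU (Real.log σ - t/2) t x)
      (s⁻¹ * ∫ x : ℝ, F x * bsKUU u0 t x) s := by
    have hmain := bsParamDeriv F M hFbd
      (fun θ x => bsKU (Real.log θ - t/2) t x)
      (fun θ x => bsKUU (Real.log θ - t/2) t x * θ⁻¹)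
      s (s/4) (by linarith)
      (fun θ => hmeasKU _ _)
      ((hFmeas.mul ((bsKUU_cont _ _).measurable.mul_const s⁻¹)).aestronglyMeasurable)
      (fun x θ hθ => by
        have hd : |θ - s| < s/4 := by rw [← Real.dist_eq]; exact Metric.mem_ball.1 hθ
        have hdl := abs_lt.1 hd
        have hθpos : 0 < θ := by linarith
        exact bsCompU_deriv_s t x hθpos)
      (fun x => B * Real.exp (-x^2/(16*t)) * (2/s))
      (fun x θ hθ => by
        have hd : |θ - s| < s/4 := by rw [← Real.dist_eq]; exact Metric.mem_ball.1 hθ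
        have hdl := abs_lt.1 hd
        have hθpos : 0 < θ := by linarith
        have hlog : |Real.log θ - Real.log s| ≤ 2 :=
          bsLogBound s θ hs hθpos (by linarith) (by linarith)
        have hudist : |(Real.log θ - t/2) - u0| ≤ 2 + t := by
          have heq2 : (Real.log θ - t/2) - u0 = Real.log θ - Real.log s := by rw [hu0]; ring
          rw [heq2]; linarith
        have hb := (hBd (Real.log θ - t/2) t x hudist ht1 ht2).2.2
        have hinv : θ⁻¹ ≤ 2/s := by
          rw [inv_eq_one_div, div_le_div_iff₀ hθpos hs]; linarith
        calc |bsKUU (Real.log θ - t/2) t x * θ⁻¹|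
            = |bsKUU (Real.log θ - t/2) t x| * θ⁻¹ := by
              rw [abs_mul, abs_of_pos (inv_pos.2 hθpos)]
          _ ≤ (B * Real.exp (-x^2/(16*t))) * (2/s) :=
              mul_le_mul hb hinv (inv_pos.2 hθpos).le (by positivity)
          _ = B * Real.exp (-x^2/(16*t)) * (2/s) := by ring)
      ((hGint.const_mul B).mul_const (2/s))
      (by exact intKU)
    have hder := hmain.2
    beta_reduce at hder
    have heq : (fun x => F x * (bsKUU (Real.log s - t/2) t x * s⁻¹))
        = fun x => s⁻¹ * (F x * bsKUU u0 t x) := funext fun x => by rw [hu0]; ring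
    rw [heq, integral_const_mul] at hder
    exact hder
  have hD2 : HasDerivAt (fun σ => σ⁻¹ * ∫ x : ℝ, F x * bsKU (Real.log σ - t/2) t x)
      (-(s^2)⁻¹ * (∫ x : ℝ, F x * bsKU u0 t x)
        + s⁻¹ * (s⁻¹ * ∫ x : ℝ, F x * bsKUU u0 t x)) s := by
    have hinv : HasDerivAt (fun σ : ℝ => σ⁻¹) (-(s^2)⁻¹) s := hasDerivAt_inv hs.ne'
    have := hinv.mul hD
    exact this
  have hderivp : ∀ σ ∈ Metric.ball s (s/2), deriv (fun s' => p s' t) σ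
      = σ⁻¹ * ∫ x : ℝ, F x * bsKU (Real.log σ - t/2) t x := by
    intro σ hσmem
    have hσd : |σ - s| < s/2 := by rw [← Real.dist_eq]; exact Metric.mem_ball.1 hσmem
    have hσl := abs_lt.1 hσd
    have hσpos : 0 < σ := by linarith
    have hps' : (fun s' => p s' t)
        =ᶠ[nhds σ] (fun σ' => ∫ x : ℝ, F x * bsKern (Real.log σ' - t/2) t x) := by
      filter_upwards [isOpen_Ioi.mem_nhds (Set.mem_Ioi.2 hσpos)] with σ' hσ'
      rw [hp σ' t]
      exact bsRepr f σ' t hσ' ht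
    rw [hps'.deriv_eq]
    exact (hC σ hσmem).deriv
  have hderiv_ev : deriv (fun s' => p s' t)
      =ᶠ[nhds s] (fun σ => σ⁻¹ * ∫ x : ℝ, F x * bsKU (Real.log σ - t/2) t x) := by
    filter_upwards [Metric.ball_mem_nhds s (by positivity : (0:ℝ) < s/2)] with σ hσ
    exact hderivp σ hσ
  have hRHS : iteratedDeriv 2 (fun s' => p s' t) s
      = -(s^2)⁻¹ * (∫ x : ℝ, F x * bsKU u0 t x)
        + s⁻¹ * (s⁻¹ * ∫ x : ℝ, F x * bsKUU u0 t x) := by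
    rw [iteratedDeriv_succ, iteratedDeriv_one, hderiv_ev.deriv_eq]
    exact hD2.deriv
  rw [hLHS, hRHS]
  have hsplit : (fun x => F x * ((1/2) * bsKUU u0 t x - (1/2) * bsKU u0 t x))
      = fun x => (1/2) * (F x * bsKUU u0 t x) - (1/2) * (F x * bsKU u0 t x) :=
    funext fun x => by ring
  rw [hsplit, integral_sub (intKUU.const_mul _) (intKU.const_mul _),
    integral_const_mul, integral_const_mul]
  have hs2 : (s:ℝ) ≠ 0 := hs.ne'
  field_simp
  ring
end

section
/- With Φ the standard normal CDF, φ its density, and d±(s,t) = (log(s/K) ± t/2)/√t, the Black–Scholes put function p_K(s,t) = KΦ(−d₋(s,t)) − sΦ(−d₊(s,t)) satisfies p_K(s,t) = ∫_ℝ (K − s·exp(√t x − t/2))₊ φ(x) dx for all s, t, K > 0. -/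
open MeasureTheory Real

/-- The Black–Scholes put `p_K(s,t) = KΦ(−d₋) − sΦ(−d₊)` equals
`∫ (K − s·exp(√t x − t/2))₊ φ(x) dx` for all `s, t, K > 0`. -/
theorem stmt8 (K s t : ℝ) (hK : 0 < K) (hs : 0 < s) (ht : 0 < t)
    (φ Φ : ℝ → ℝ) (hφ : ∀ x, φ x = (2 * π) ^ (-(1:ℝ)/2) * exp (-x ^ 2 / 2))
    (hΦ : ∀ x, Φ x = ∫ y in Set.Iic x, φ y)
    (dm dp : ℝ → ℝ → ℝ)
    (hdm : ∀ s' t', dm s' t' = (log (s' / K) - t' / 2) / sqrt t')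
    (hdp : ∀ s' t', dp s' t' = (log (s' / K) + t' / 2) / sqrt t') :
    K * Φ (-(dm s t)) - s * Φ (-(dp s t)) =
      ∫ x : ℝ, max (K - s * exp (sqrt t * x - t / 2)) 0 * φ x := by
  have hst : (0:ℝ) < Real.sqrt t := Real.sqrt_pos.mpr ht
  have hmul : Real.sqrt t * Real.sqrt t = t := Real.mul_self_sqrt ht.le
  set c : ℝ := -(dm s t) with hc
  have hcmul : Real.sqrt t * c = Real.log K - Real.log s + t / 2 := by
    rw [hc, hdm, Real.log_div hs.ne' hK.ne']
    field_simp
    ring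
  have hcond : ∀ x : ℝ, s * Real.exp (Real.sqrt t * x - t / 2) ≤ K ↔ x ≤ c := by
    intro x
    rw [mul_comm, ← le_div_iff₀ hs, ← Real.le_log_iff_exp_le (div_pos hK hs),
      Real.log_div hK.ne' hs.ne', sub_le_iff_le_add, ← hcmul,
      mul_le_mul_iff_right₀ hst]
  -- integrability of φ
  have hφeq : φ = fun x : ℝ => (2 * π) ^ (-(1:ℝ)/2) * Real.exp (-(1/2) * x ^ 2) := by
    funext x
    rw [hφ, show -x ^ 2 / 2 = -(1/2) * x ^ 2 from by ring]
  have hφint : Integrable φ := by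
    rw [hφeq]
    exact (integrable_exp_neg_mul_sq (by norm_num : (0:ℝ) < 1/2)).const_mul _
  -- shift identity
  have hshift : ∀ x : ℝ, Real.exp (Real.sqrt t * x - t / 2) * φ x = φ (x - Real.sqrt t) := by
    intro x
    rw [hφ, hφ, mul_left_comm, ← Real.exp_add]
    congr 2
    have : (x - Real.sqrt t) ^ 2 = x ^ 2 - 2 * Real.sqrt t * x + t := by
      rw [sub_sq, Real.sq_sqrt ht.le]; ring
    rw [this]; ring
  -- rewrite integrand as indicator
  have hind : (fun x : ℝ => max (K - s * Real.exp (Real.sqrt t * x - t / 2)) 0 * φ x)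
      = Set.indicator (Set.Iic c)
          (fun x => (K - s * Real.exp (Real.sqrt t * x - t / 2)) * φ x) := by
    funext x
    by_cases hx : x ≤ c
    · rw [Set.indicator_of_mem (Set.mem_Iic.mpr hx)]
      congr 1
      exact max_eq_left (sub_nonneg.mpr ((hcond x).mpr hx))
    · rw [Set.indicator_of_notMem (fun h => hx (Set.mem_Iic.mp h))]
      have h1 : K - s * Real.exp (Real.sqrt t * x - t / 2) < 0 := by
        have := lt_of_not_ge (fun h => hx ((hcond x).mp h))
        linarith
      rw [max_eq_right h1.le, zero_mul]
  rw [hind, MeasureTheory.integral_indicator measurableSet_Iic]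
  have hcongr : ∀ x ∈ Set.Iic c,
      (K - s * Real.exp (Real.sqrt t * x - t / 2)) * φ x
        = K * φ x - s * φ (x - Real.sqrt t) := by
    intro x _
    rw [← hshift x]; ring
  rw [MeasureTheory.setIntegral_congr_fun measurableSet_Iic hcongr]
  have hφintshift : Integrable (fun x : ℝ => φ (x - Real.sqrt t)) :=
    hφint.comp_sub_right _
  rw [MeasureTheory.integral_sub ((hφint.const_mul K).integrableOn)
    ((hφintshift.const_mul s).integrableOn),
    MeasureTheory.integral_const_mul, MeasureTheory.integral_const_mul]
  -- substitution in the second integral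
  have hsub : ∫ x in Set.Iic c, φ (x - Real.sqrt t)
      = ∫ y in Set.Iic (c - Real.sqrt t), φ y := by
    rw [← MeasureTheory.integral_indicator measurableSet_Iic,
      ← MeasureTheory.integral_indicator measurableSet_Iic,
      ← MeasureTheory.integral_sub_right_eq_self
        (Set.indicator (Set.Iic (c - Real.sqrt t)) φ) (Real.sqrt t)]
    congr 1
    funext x
    by_cases hx : x ≤ c
    · rw [Set.indicator_of_mem (Set.mem_Iic.mpr hx),
        Set.indicator_of_mem (by simpa using hx : x - Real.sqrt t ∈ Set.Iic (c - Real.sqrt t))]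
    · rw [Set.indicator_of_notMem (fun h => hx (Set.mem_Iic.mp h)), Set.indicator_of_notMem (by simpa using hx)]
  have hceq : c - Real.sqrt t = -(dp s t) := by
    rw [hc, hdm, hdp]
    field_simp
    linarith [hmul]
  rw [hsub, hceq, hΦ, hΦ]
end
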